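/- Let v₁, v₂ be polynomials of degree at most p in one variable, and suppose v₁(x) = v₂(x) + ∑_{k=1}^p (1/k!)·J_k·(x - x_F)^k for some point x_F and real jumps J_k = v₁^{(k)}(x_F) - v₂^{(k)}(x_F). Then for any interval T₁ = [x_F, x_F + h], ‖v₁‖²_{L²(T₁)} ≤ (1 + ∑_{k=1}^p 1/w_k)·(‖v₂‖²_{L²(T₁)} + ∑_{k=1}^p w_k·(h^{2k+1}/((2k+1)(k!)²))·J_k²) for any positive weights w_1,…,w_p. -/

import Mathlib

open Polynomial Finset intervalIntegral

/-!
Write `v₁ = v₂ + ∑ₖ Tₖ` with `Tₖ x = J_k (x - x_F)^k / k!`. Pointwise, Cauchy–Schwarz with weights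
`1` on `v₂` and `w_k` on `Tₖ` gives `v₁² ≤ (1 + ∑ 1/w_k)(v₂² + ∑ w_k Tₖ²)`; integrating over
`[x_F, x_F + h]` and using `∫ (x - x_F)^(2k) = h^(2k+1)/(2k+1)` gives the claim.
-/

theorem add_sq_le_one_add_mul_of_sq_le_mul {a b S Q : ℝ} (hS : 0 ≤ S) (hQ : 0 ≤ Q)
    (hb : b ^ 2 ≤ S * Q) : (a + b) ^ 2 ≤ (1 + S) * (a ^ 2 + Q) := by
  simpa [Fin.sum_univ_two] using sum_sq_le_sum_mul_sum_of_sq_le_mul univ (r := ![a, b])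
    (f := ![1, S]) (g := ![a ^ 2, Q]) (by simp [Fin.forall_fin_two, hS])
    (by simp [Fin.forall_fin_two, hQ, sq_nonneg]) (by simp [Fin.forall_fin_two, hb])

theorem sq_sum_le_sum_one_div_mul_sum_mul {ι : Type*} (s : Finset ι) (w b : ι → ℝ)
    (hw : ∀ i ∈ s, 0 < w i) :
    (∑ i ∈ s, b i) ^ 2 ≤ (∑ i ∈ s, 1 / w i) * ∑ i ∈ s, w i * b i ^ 2 :=
  sum_sq_le_sum_mul_sum_of_sq_le_mul s (fun i hi => one_div_nonneg.2 (hw i hi).le)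
    (fun i hi => mul_nonneg (hw i hi).le (sq_nonneg _))
    (fun i hi => (by field_simp [(hw i hi).ne'] : b i ^ 2 = 1 / w i * (w i * b i ^ 2)).le)

theorem sq_add_sum_le_one_add_sum_one_div_mul {ι : Type*} (s : Finset ι) (a : ℝ) (w b : ι → ℝ)
    (hw : ∀ i ∈ s, 0 < w i) :
    (a + ∑ i ∈ s, b i) ^ 2 ≤ (1 + ∑ i ∈ s, 1 / w i) * (a ^ 2 + ∑ i ∈ s, w i * b i ^ 2) :=
  add_sq_le_one_add_mul_of_sq_le_mul (sum_nonneg fun i hi => one_div_nonneg.2 (hw i hi).le)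
    (sum_nonneg fun i hi => mul_nonneg (hw i hi).le (sq_nonneg _))
    (sq_sum_le_sum_one_div_mul_sum_mul s w b hw)

theorem integral_sub_left_pow (c h : ℝ) (n : ℕ) :
    ∫ x in c..(c + h), (x - c) ^ n = h ^ (n + 1) / (n + 1) := by
  simp [integral_comp_sub_right (fun x : ℝ => x ^ n) c, integral_pow]

theorem integral_sq_taylor_monomial (c h J : ℝ) (k : ℕ) :
    ∫ x in c..(c + h), (1 / (k.factorial : ℝ) * J * (x - c) ^ k) ^ 2 =
      h ^ (2 * k + 1) / ((2 * k + 1) * (k.factorial : ℝ) ^ 2) * J ^ 2 := by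
  have hfac : (k.factorial : ℝ) ≠ 0 := by positivity
  calc ∫ x in c..(c + h), (1 / (k.factorial : ℝ) * J * (x - c) ^ k) ^ 2
      = (J / k.factorial) ^ 2 * ∫ x in c..(c + h), (x - c) ^ (2 * k) := by
        rw [← integral_const_mul]
        congr 1 with x
        ring
    _ = _ := by
        rw [integral_sub_left_pow]
        push_cast
        field_simp

theorem fundamental_inequality_1d_general (p : ℕ) (v₁ v₂ : Polynomial ℝ)
    (x_F h : ℝ) (hh : 0 < h) (J : ℕ → ℝ)
    (htaylor : ∀ x : ℝ, v₁.eval x =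
      v₂.eval x + ∑ k ∈ Icc 1 p, (1 / (k.factorial : ℝ)) * J k * (x - x_F) ^ k)
    (w : ℕ → ℝ) (hw : ∀ k ∈ Icc 1 p, 0 < w k) :
    (∫ x in x_F..(x_F + h), (v₁.eval x) ^ 2) ≤
      (1 + ∑ k ∈ Icc 1 p, 1 / w k) *
        ((∫ x in x_F..(x_F + h), (v₂.eval x) ^ 2) +
          ∑ k ∈ Icc 1 p,
            w k * (h ^ (2 * k + 1) / ((2 * k + 1) * (k.factorial : ℝ) ^ 2)) * (J k) ^ 2) := by
  set T : ℕ → ℝ → ℝ := fun k x => 1 / (k.factorial : ℝ) * J k * (x - x_F) ^ k with hT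
  calc ∫ x in x_F..(x_F + h), v₁.eval x ^ 2
      ≤ ∫ x in x_F..(x_F + h), (1 + ∑ k ∈ Icc 1 p, 1 / w k) *
          (v₂.eval x ^ 2 + ∑ k ∈ Icc 1 p, w k * T k x ^ 2) :=
        integral_mono_on (by linarith) (Continuous.intervalIntegrable (by fun_prop) _ _)
          (Continuous.intervalIntegrable (by fun_prop) _ _)
          fun x _ => htaylor x ▸ sq_add_sum_le_one_add_sum_one_div_mul (Icc 1 p) _ w (T · x) hw
    _ = _ := by
        rw [integral_const_mul, integral_add (Continuous.intervalIntegrable (by fun_prop) _ _)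
          (Continuous.intervalIntegrable (by fun_prop) _ _),
          integral_finsetSum fun k _ => Continuous.intervalIntegrable (by fun_prop) _ _]
        simp_rw [integral_const_mul, hT, integral_sq_taylor_monomial, mul_assoc]

/-- One-dimensional fundamental inequality (Lemma 5.1): if
`v₁(x) = v₂(x) + ∑_{k=1}^p (J_k/k!)(x-x_F)^k` with jumps
`J_k = v₁⁽ᵏ⁾(x_F) - v₂⁽ᵏ⁾(x_F)`, then for `T₁ = [x_F, x_F+h]` and any positive
weights `w_k`,
`‖v₁‖²_{L²(T₁)} ≤ (1 + ∑ 1/w_k)(‖v₂‖²_{L²(T₁)} + ∑ w_k h^(2k+1)/((2k+1)(k!)²) J_k²)`. -/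
theorem fundamental_inequality_1d (p : ℕ) (v₁ v₂ : Polynomial ℝ)
    (hv₁ : v₁.natDegree ≤ p) (hv₂ : v₂.natDegree ≤ p)
    (x_F h : ℝ) (hh : 0 < h) (J : ℕ → ℝ)
    (hJ : ∀ k, J k = (derivative^[k] v₁).eval x_F - (derivative^[k] v₂).eval x_F)
    (htaylor : ∀ x : ℝ, v₁.eval x =
      v₂.eval x + ∑ k ∈ Icc 1 p, (1 / (k.factorial : ℝ)) * J k * (x - x_F) ^ k)
    (w : ℕ → ℝ) (hw : ∀ k ∈ Icc 1 p, 0 < w k) :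
    (∫ x in x_F..(x_F + h), (v₁.eval x) ^ 2) ≤
      (1 + ∑ k ∈ Icc 1 p, 1 / w k) *
        ((∫ x in x_F..(x_F + h), (v₂.eval x) ^ 2) +
          ∑ k ∈ Icc 1 p,
            w k * (h ^ (2 * k + 1) / ((2 * k + 1) * (k.factorial : ℝ) ^ 2)) * (J k) ^ 2) :=
  fundamental_inequality_1d_general p v₁ v₂ x_F h hh J htaylor w hw
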